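/- Fix μ ∈ ℝ, σ > 0, and α₀, β₀ > 0. Consider the functional Φ(q) = ∫_{(0,∞)} KL(N(μ, σ²) ‖ N(0, ω^{-1})) dq(ω) + KL(q ‖ Gamma(α₀, β₀)) over probability measures q on (0,∞) with q ≪ Gamma(α₀, β₀), finite KL(q‖Gamma(α₀,β₀)), and ω-integrand q-integrable. Then Φ is uniquely minimized at q* = Gamma( α₀ + 1/2 , β₀ + (μ² + σ²)/2 ). -/

import Mathlib

/-! For `ω > 0`, `KL(N(μ,σ²) ‖ N(0,ω⁻¹)) = δω - ½ log ω - ½ - log σ` with `δ = (μ² + σ²)/2`, so up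
to an additive constant the integrand of `Φ` is `-f` for `f ω = ½ log ω - δω`. Gibbs' variational
principle `KL(q‖p) - ∫ f dq = KL(q‖p.tilted f) - log ∫ exp f dp` then gives
`Φ(q) = KL(q‖q*) + C` with `q*` the exponential tilt of `Gamma(α₀, β₀)` by `f`; since the Gamma
laws form an exponential family in `(log ω, ω)`, this tilt is `Gamma(α₀ + ½, β₀ + δ)`. Gibbs'
inequality and its equality case conclude. -/

open MeasureTheory ProbabilityTheory
open scoped ENNReal NNReal

/- Kullback–Leibler divergence `KL(q‖p)`, valued in `[0,∞]`:
`∫ log (dq/dp) dq` if `q ≪ p` and the log-density is `q`-integrable, and `+∞` otherwise. -/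
open Classical in
noncomputable def klDiv {Ω : Type*} [MeasurableSpace Ω] (q p : Measure Ω) : ℝ≥0∞ :=
  if q ≪ p ∧ Integrable (llr q p) q then ENNReal.ofReal (∫ x, llr q p x ∂q) else ⊤

/- `KL(N(μ, σ²) ‖ N(0, ω⁻¹))` as a real number, where `N` is the real Gaussian measure. -/
noncomputable def gaussKL (μ σ ω : ℝ) : ℝ :=
  (klDiv (gaussianReal μ (Real.toNNReal (σ ^ 2))) (gaussianReal 0 (Real.toNNReal ω⁻¹))).toReal

/- The functional `Φ(q) = ∫ KL(N(μ,σ²)‖N(0,ω⁻¹)) dq(ω) + KL(q ‖ Gamma(α₀, β₀))`. -/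
noncomputable def sparseObjective (μ σ α₀ β₀ : ℝ) (q : Measure ℝ) : ℝ :=
  (∫ ω, gaussKL μ σ ω ∂q) + (klDiv q (gammaMeasure α₀ β₀)).toReal

open Real Set

lemma eq_of_eq_smul_of_isProbabilityMeasure {α : Type*} {mα : MeasurableSpace α}
    {μ ν : Measure α} [IsProbabilityMeasure μ] [IsProbabilityMeasure ν] {c : ℝ≥0∞}
    (h : μ = c • ν) : μ = ν := by
  have hc : c = 1 := by simpa using congrArg (· univ) h.symm
  rw [h, hc, one_smul]

section KL

variable {α : Type*} {mα : MeasurableSpace α} {p q : Measure α}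

-- Mathlib's `klDiv` adds the correction `p univ - q univ`, which vanishes for probability measures.
lemma klDiv_eq_informationTheory_klDiv [IsProbabilityMeasure q] [IsProbabilityMeasure p] :
    klDiv q p = InformationTheory.klDiv q p := by
  unfold klDiv
  split_ifs with h
  · simp [InformationTheory.klDiv_of_ac_of_integrable h.1 h.2]
  · exact (InformationTheory.klDiv_eq_top_iff.mpr fun hac hint => h ⟨hac, hint⟩).symm

lemma toReal_klDiv_eq_integral_llr [IsProbabilityMeasure q] [IsProbabilityMeasure p]
    (hqp : q ≪ p) : (klDiv q p).toReal = ∫ x, llr q p x ∂q := by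
  rw [klDiv_eq_informationTheory_klDiv, InformationTheory.toReal_klDiv_of_measure_eq hqp (by simp)]

lemma integrable_llr_of_klDiv_ne_top (h : klDiv q p ≠ ⊤) : Integrable (llr q p) q := by
  unfold klDiv at h
  split_ifs at h with hqp
  exacts [hqp.2, absurd rfl h]

lemma toReal_klDiv_eq_zero_iff [IsProbabilityMeasure q] [IsProbabilityMeasure p]
    (h : klDiv q p ≠ ⊤) : (klDiv q p).toReal = 0 ↔ q = p := by
  rw [ENNReal.toReal_eq_zero_iff, or_iff_left h, klDiv_eq_informationTheory_klDiv,
    InformationTheory.klDiv_eq_zero_iff]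

lemma toReal_klDiv_tilted [IsProbabilityMeasure q] [IsProbabilityMeasure p] {f : α → ℝ}
    (hqp : q ≪ p) (hkl : klDiv q p ≠ ⊤) (hfq : Integrable f q)
    (hfp : Integrable (fun x => exp (f x)) p) :
    (klDiv q (p.tilted f)).toReal = (klDiv q p).toReal - ∫ x, f x ∂q + log (∫ x, exp (f x) ∂p) := by
  have := isProbabilityMeasure_tilted hfp
  rw [toReal_klDiv_eq_integral_llr hqp,
    toReal_klDiv_eq_integral_llr (hqp.trans (absolutelyContinuous_tilted hfp))]
  exact integral_llr_tilted_right hqp hfq hfp (integrable_llr_of_klDiv_ne_top hkl)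

lemma klDiv_tilted_ne_top [IsProbabilityMeasure q] [IsProbabilityMeasure p] {f : α → ℝ}
    (hqp : q ≪ p) (hkl : klDiv q p ≠ ⊤) (hfq : Integrable f q)
    (hfp : Integrable (fun x => exp (f x)) p) : klDiv q (p.tilted f) ≠ ⊤ := by
  have := isProbabilityMeasure_tilted hfp
  rw [klDiv_eq_informationTheory_klDiv, InformationTheory.klDiv_ne_top_iff]
  exact ⟨hqp.trans (absolutelyContinuous_tilted hfp),
    integrable_llr_tilted_right hqp hfq (integrable_llr_of_klDiv_ne_top hkl) hfp⟩

lemma klDiv_tilted_left_ne_top [IsProbabilityMeasure p] {f : α → ℝ}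
    (hfp : Integrable (fun x => exp (f x)) p) (hf : Integrable f (p.tilted f)) :
    klDiv (p.tilted f) p ≠ ⊤ := by
  have := isProbabilityMeasure_tilted hfp
  have hllr : Integrable (llr (p.tilted f) p) (p.tilted f) := by
    rw [llr_def, integrable_congr ((tilted_absolutelyContinuous p f).ae_le
      (log_rnDeriv_tilted_left_self hfp))]
    exact hf.sub (integrable_const _)
  rw [klDiv, if_pos ⟨tilted_absolutelyContinuous p f, hllr⟩]
  exact ENNReal.ofReal_ne_top

end KL

section Gaussian

variable {μ m : ℝ} {v w : ℝ≥0}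

lemma log_gaussianPDFReal (hv : v ≠ 0) (x : ℝ) :
    log (gaussianPDFReal μ v x) = -log (2 * π * v) / 2 - (x - μ) ^ 2 / (2 * v) := by
  have hv' : (0 : ℝ) < v := by positivity
  rw [gaussianPDFReal, log_mul (by positivity) (exp_pos _).ne', log_exp, log_inv,
    log_sqrt (by positivity)]
  ring

lemma llr_gaussianReal (hv : v ≠ 0) (hw : w ≠ 0) :
    llr (gaussianReal μ v) (gaussianReal m w) =ᵐ[gaussianReal μ v]
      fun x => log (gaussianPDFReal μ v x) - log (gaussianPDFReal m w x) := by
  have h := Measure.rnDeriv_withDensity_right (gaussianReal μ v) volume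
    (measurable_gaussianPDF m w).aemeasurable
    (ae_of_all _ fun x => (gaussianPDF_pos m hw x).ne') (ae_of_all _ fun x => gaussianPDF_lt_top.ne)
  rw [← gaussianReal_of_var_ne_zero m hw] at h
  filter_upwards [(gaussianReal_absolutelyContinuous μ hv).ae_le (h.and (rnDeriv_gaussianReal μ v))]
    with x ⟨hx, hx'⟩
  have hμx := gaussianPDFReal_pos μ v x hv
  have hmx := gaussianPDFReal_pos m w x hw
  rw [llr, hx, hx', gaussianPDF, gaussianPDF, ← ENNReal.ofReal_inv_of_pos hmx,
    ← ENNReal.ofReal_mul (inv_pos.2 hmx).le, ENNReal.toReal_ofReal (by positivity),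
    log_mul (inv_pos.2 hmx).ne' hμx.ne', log_inv]
  ring

lemma integral_sub_sq_gaussianReal (m : ℝ) :
    ∫ x, (x - m) ^ 2 ∂gaussianReal μ v = (μ - m) ^ 2 + v := by
  have hX : MemLp (fun x => x - m) 2 (gaussianReal μ v) :=
    (memLp_id_gaussianReal 2).sub (memLp_const m)
  have hvar := variance_eq_sub hX
  rw [variance_sub_const (X := fun x => x) aestronglyMeasurable_id, variance_fun_id_gaussianReal,
    integral_sub (f := fun x => x) ((memLp_id_gaussianReal 1).integrable le_rfl)
      (integrable_const m),
    integral_id_gaussianReal] at hvar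
  simp only [Pi.pow_apply, integral_const, probReal_univ, smul_eq_mul, one_mul] at hvar
  linarith

lemma gaussKL_eq (μ : ℝ) {σ ω : ℝ} (hσ : σ ≠ 0) (hω : 0 < ω) :
    gaussKL μ σ ω = (μ ^ 2 + σ ^ 2) / 2 * ω - 1 / 2 - log σ - log ω / 2 := by
  set v := (σ ^ 2).toNNReal
  set w := ω⁻¹.toNNReal
  have hv : (v : ℝ) = σ ^ 2 := Real.coe_toNNReal _ (sq_nonneg σ)
  have hw : (w : ℝ) = ω⁻¹ := Real.coe_toNNReal _ (inv_nonneg.2 hω.le)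
  have hv0 : v ≠ 0 := by simp [v, hσ]
  have hw0 : w ≠ 0 := by simp [w, hω]
  have hint (m : ℝ) : Integrable (fun x => (x - m) ^ 2) (gaussianReal μ v) :=
    ((memLp_id_gaussianReal 2).sub (memLp_const m)).integrable_sq
  rw [gaussKL, toReal_klDiv_eq_integral_llr ((gaussianReal_absolutelyContinuous μ hv0).trans
    (gaussianReal_absolutelyContinuous' 0 hw0)), integral_congr_ae (llr_gaussianReal hv0 hw0)]
  simp_rw [log_gaussianPDFReal hv0, log_gaussianPDFReal hw0]
  calc ∫ x, (-log (2 * π * v) / 2 - (x - μ) ^ 2 / (2 * v)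
        - (-log (2 * π * w) / 2 - (x - 0) ^ 2 / (2 * w))) ∂gaussianReal μ v
      = ∫ x, ((log (2 * π * w) - log (2 * π * v)) / 2
          + ((x - 0) ^ 2 / (2 * w) - (x - μ) ^ 2 / (2 * v))) ∂gaussianReal μ v := by
        congr 1 with x; ring
    _ = (log (2 * π * w) - log (2 * π * v)) / 2
          + (((μ - 0) ^ 2 + v) / (2 * w) - ((μ - μ) ^ 2 + v) / (2 * v)) := by
        have h0 := (hint 0).div_const (2 * (w : ℝ))
        have hμ := (hint μ).div_const (2 * (v : ℝ))
        have hsub : Integrable (fun x => (x - 0) ^ 2 / (2 * (w : ℝ)) - (x - μ) ^ 2 / (2 * (v : ℝ)))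
            (gaussianReal μ v) := h0.sub hμ
        rw [integral_add (integrable_const _) hsub, integral_sub h0 hμ, integral_const,
          integral_div, integral_div, integral_sub_sq_gaussianReal, integral_sub_sq_gaussianReal]
        simp
    _ = (μ ^ 2 + σ ^ 2) / 2 * ω - 1 / 2 - log σ - log ω / 2 := by
        rw [hv, hw, log_mul (x := 2 * π) (by positivity) (by positivity),
          log_mul (x := 2 * π) (by positivity) (by positivity), log_inv, log_pow]
        field_simp
        ring

end Gaussian

section Gamma

variable {a r : ℝ}

lemma measurable_gammaPDF : Measurable (gammaPDF a r) :=
  (measurable_gammaPDFReal a r).ennreal_ofReal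

lemma ae_pos_gammaMeasure (a r : ℝ) : ∀ᵐ x ∂gammaMeasure a r, 0 < x := by
  rw [gammaMeasure, ae_withDensity_iff measurable_gammaPDF]
  filter_upwards [Measure.ae_ne volume 0] with x hx0 hx
  by_contra! hneg
  exact hx (gammaPDF_of_neg (lt_of_le_of_ne hneg hx0))

lemma integrable_gammaMeasure_iff (ha : 0 < a) (hr : 0 < r) {g : ℝ → ℝ} :
    Integrable g (gammaMeasure a r) ↔ Integrable (fun x => g x * gammaPDFReal a r x) := by
  rw [gammaMeasure, integrable_withDensity_iff measurable_gammaPDF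
    (ae_of_all _ fun _ => ENNReal.ofReal_lt_top)]
  simp only [gammaPDF, ENNReal.toReal_ofReal (gammaPDFReal_nonneg ha hr _)]

lemma integrable_gammaPDFReal (ha : 0 < a) (hr : 0 < r) : Integrable (gammaPDFReal a r) := by
  have := isProbabilityMeasure_gammaMeasure ha hr
  simpa using (integrable_gammaMeasure_iff ha hr).1 (integrable_const (1 : ℝ))

lemma gammaPDFReal_mul_exp_ae_eq {c δ : ℝ} (hac : 0 < a + c) (hrδ : 0 < r + δ) :
    (fun x => gammaPDFReal a r x * exp (c * log x - δ * x)) =ᵐ[volume] fun x =>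
      r ^ a / Gamma a * Gamma (a + c) / (r + δ) ^ (a + c) * gammaPDFReal (a + c) (r + δ) x := by
  filter_upwards [Measure.ae_ne volume 0] with x hx0
  rcases hx0.lt_or_gt with hx | hx
  · simp [gammaPDFReal, hx.not_ge]
  · have hΓ : 0 < Gamma (a + c) := Gamma_pos_of_pos hac
    have hrδa : 0 < (r + δ) ^ (a + c) := rpow_pos_of_pos hrδ _
    simp only [gammaPDFReal, if_pos hx.le]
    rw [exp_sub, mul_comm c, ← rpow_def_of_pos hx, show a + c - 1 = (a - 1) + c by ring,
      rpow_add hx, show -((r + δ) * x) = -(r * x) - δ * x by ring, exp_sub]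
    field_simp

lemma integrable_exp_gammaMeasure (ha : 0 < a) (hr : 0 < r) {c δ : ℝ} (hac : 0 < a + c)
    (hrδ : 0 < r + δ) : Integrable (fun x => exp (c * log x - δ * x)) (gammaMeasure a r) := by
  rw [integrable_gammaMeasure_iff ha hr, integrable_congr (by
    filter_upwards [gammaPDFReal_mul_exp_ae_eq hac hrδ] with x hx
    rw [mul_comm, hx])]
  exact (integrable_gammaPDFReal hac hrδ).const_mul _

lemma gammaMeasure_tilted (ha : 0 < a) (hr : 0 < r) {c δ : ℝ} (hac : 0 < a + c)
    (hrδ : 0 < r + δ) :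
    (gammaMeasure a r).tilted (fun x => c * log x - δ * x) = gammaMeasure (a + c) (r + δ) := by
  have := isProbabilityMeasure_gammaMeasure ha hr
  have := isProbabilityMeasure_gammaMeasure hac hrδ
  have hexp := integrable_exp_gammaMeasure ha hr hac hrδ
  have := isProbabilityMeasure_tilted hexp
  have hZ := integral_exp_pos hexp
  set Z := ∫ x, exp (c * log x - δ * x) ∂gammaMeasure a r with hZdef
  refine eq_of_eq_smul_of_isProbabilityMeasure
    (c := ENNReal.ofReal (r ^ a / Gamma a * Gamma (a + c) / (r + δ) ^ (a + c) / Z)) ?_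
  rw [Measure.tilted, ← hZdef]
  rw [gammaMeasure, gammaMeasure, ← withDensity_mul _ measurable_gammaPDF
    (by fun_prop), ← withDensity_smul _ measurable_gammaPDF]
  refine withDensity_congr_ae ?_
  filter_upwards [gammaPDFReal_mul_exp_ae_eq hac hrδ] with x hx
  simp only [Pi.mul_apply, Pi.smul_apply, smul_eq_mul, gammaPDF]
  rw [← ENNReal.ofReal_mul (gammaPDFReal_nonneg ha hr x), mul_div_assoc', hx,
    ← ENNReal.ofReal_mul (div_nonneg (by positivity) hZ.le)]
  congr 1
  ring

lemma integrable_rpow_gammaMeasure (ha : 0 < a) (hr : 0 < r) {s : ℝ} (hs : -a < s) :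
    Integrable (fun x => x ^ s) (gammaMeasure a r) := by
  refine (integrable_exp_gammaMeasure ha hr (c := s) (δ := 0) (by linarith) (by simpa)).congr ?_
  filter_upwards [ae_pos_gammaMeasure a r] with x hx
  rw [zero_mul, sub_zero, mul_comm, rpow_def_of_pos hx]

lemma integrable_id_gammaMeasure (ha : 0 < a) (hr : 0 < r) :
    Integrable (fun x => x) (gammaMeasure a r) := by
  simpa using integrable_rpow_gammaMeasure ha hr (s := 1) (by linarith)

lemma abs_log_le_rpow_neg_div_add {x t : ℝ} (hx : 0 < x) (ht : 0 < t) :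
    |log x| ≤ x ^ (-t) / t + x := by
  rcases le_or_gt x 1 with hx1 | hx1
  · have h := (abs_log_mul_self_rpow_lt x t hx hx1 ht).le
    rw [abs_mul, abs_of_pos (rpow_pos_of_pos hx t), ← le_div_iff₀ (rpow_pos_of_pos hx t)] at h
    have h' : 1 / t / x ^ t = x ^ (-t) / t := by rw [rpow_neg hx.le]; field_simp
    linarith
  · rw [abs_of_pos (log_pos hx1)]
    linarith [log_le_sub_one_of_pos hx, div_nonneg (rpow_pos_of_pos hx (-t)).le ht.le]

lemma integrable_log_gammaMeasure (ha : 0 < a) (hr : 0 < r) :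
    Integrable log (gammaMeasure a r) := by
  refine Integrable.mono' (((integrable_rpow_gammaMeasure ha hr (s := -(a / 2))
    (by linarith)).div_const (a / 2)).add (integrable_id_gammaMeasure ha hr))
    measurable_log.aestronglyMeasurable ?_
  filter_upwards [ae_pos_gammaMeasure a r] with x hx
  exact abs_log_le_rpow_neg_div_add hx (by positivity)

lemma gammaMeasure_absolutelyContinuous (ha : 0 < a) (hr : 0 < r) {a' r' : ℝ} (ha' : 0 < a')
    (hr' : 0 < r') : gammaMeasure a' r' ≪ gammaMeasure a r := by
  have h := gammaMeasure_tilted ha hr (c := a' - a) (δ := r' - r) (by linarith) (by linarith)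
  rw [add_sub_cancel, add_sub_cancel] at h
  exact h ▸ tilted_absolutelyContinuous _ _

lemma klDiv_gammaMeasure_ne_top (ha : 0 < a) (hr : 0 < r) {a' r' : ℝ} (ha' : 0 < a')
    (hr' : 0 < r') : klDiv (gammaMeasure a' r') (gammaMeasure a r) ≠ ⊤ := by
  have := isProbabilityMeasure_gammaMeasure ha hr
  have h := gammaMeasure_tilted ha hr (c := a' - a) (δ := r' - r) (by linarith) (by linarith)
  rw [add_sub_cancel, add_sub_cancel] at h
  rw [← h]
  refine klDiv_tilted_left_ne_top (integrable_exp_gammaMeasure ha hr (by linarith) (by linarith)) ?_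
  rw [h]
  exact ((integrable_log_gammaMeasure ha' hr').const_mul _).sub
    ((integrable_id_gammaMeasure ha' hr').const_mul _)

end Gamma

lemma integrable_gaussKL_gammaMeasure (μ : ℝ) {σ a r : ℝ} (hσ : σ ≠ 0) (ha : 0 < a) (hr : 0 < r) :
    Integrable (gaussKL μ σ) (gammaMeasure a r) := by
  have := isProbabilityMeasure_gammaMeasure ha hr
  refine ((((integrable_id_gammaMeasure ha hr).const_mul ((μ ^ 2 + σ ^ 2) / 2)).sub
    (integrable_const (1 / 2))).sub (integrable_const (log σ))).sub
    ((integrable_log_gammaMeasure ha hr).div_const 2) |>.congr ?_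
  filter_upwards [ae_pos_gammaMeasure a r] with x hx
  rw [gaussKL_eq μ hσ hx]
  rfl

lemma exists_sparseObjective_eq_toReal_klDiv_add (μ : ℝ) {σ α₀ β₀ : ℝ} (hσ : σ ≠ 0)
    (hα : 0 < α₀) (hβ : 0 < β₀) :
    ∃ C : ℝ, ∀ (q : Measure ℝ) [IsProbabilityMeasure q], q ≪ gammaMeasure α₀ β₀ →
      klDiv q (gammaMeasure α₀ β₀) ≠ ⊤ → Integrable (gaussKL μ σ) q →
      klDiv q (gammaMeasure (α₀ + 1 / 2) (β₀ + (μ ^ 2 + σ ^ 2) / 2)) ≠ ⊤ ∧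
      sparseObjective μ σ α₀ β₀ q =
        (klDiv q (gammaMeasure (α₀ + 1 / 2) (β₀ + (μ ^ 2 + σ ^ 2) / 2))).toReal + C := by
  have := isProbabilityMeasure_gammaMeasure hα hβ
  set δ := (μ ^ 2 + σ ^ 2) / 2
  have hδ : 0 < β₀ + δ := by positivity
  have hexp := integrable_exp_gammaMeasure hα hβ (c := 1 / 2) (δ := δ) (by linarith) hδ
  refine ⟨-(log (∫ x, exp (1 / 2 * log x - δ * x) ∂gammaMeasure α₀ β₀) + 1 / 2 + log σ),
    fun q _ hac hkl hint => ?_⟩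
  have hf : (fun x => 1 / 2 * log x - δ * x) =ᵐ[q] fun x => -gaussKL μ σ x - (1 / 2 + log σ) := by
    filter_upwards [hac.ae_le (ae_pos_gammaMeasure α₀ β₀)] with x hx
    rw [gaussKL_eq μ hσ hx]
    ring
  have hfq : Integrable (fun x => 1 / 2 * log x - δ * x) q :=
    (hint.neg.sub (integrable_const _)).congr hf.symm
  rw [← gammaMeasure_tilted hα hβ (by linarith) hδ]
  refine ⟨klDiv_tilted_ne_top hac hkl hfq hexp, ?_⟩
  rw [sparseObjective, toReal_klDiv_tilted hac hkl hfq hexp, integral_congr_ae hf,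
    integral_sub (f := fun x => -gaussKL μ σ x) hint.neg (integrable_const _), integral_neg,
    integral_const, probReal_univ, smul_eq_mul, one_mul]
  ring

/-- Closed-form variational update for the sparsity-controlling precision `ω` (Eq. 24 of the
paper, shape–rate parameterization): the functional
`Φ(q) = ∫ KL(N(μ,σ²)‖N(0,ω⁻¹)) dq(ω) + KL(q‖Gamma(α₀,β₀))`, over probability measures
`q ≪ Gamma(α₀,β₀)` with finite KL and integrable integrand, is uniquely minimized at
`q* = Gamma(α₀ + 1/2, β₀ + (μ² + σ²)/2)`. -/
theorem gamma_update_sparse (μ σ : ℝ) (hσ : 0 < σ) (α₀ β₀ : ℝ) (hα : 0 < α₀) (hβ : 0 < β₀)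
    (q : Measure ℝ) [IsProbabilityMeasure q] (hac : q ≪ gammaMeasure α₀ β₀)
    (hkl : klDiv q (gammaMeasure α₀ β₀) ≠ ⊤)
    (hint : Integrable (gaussKL μ σ) q) :
    sparseObjective μ σ α₀ β₀ (gammaMeasure (α₀ + 1 / 2) (β₀ + (μ ^ 2 + σ ^ 2) / 2)) ≤
      sparseObjective μ σ α₀ β₀ q ∧
    (sparseObjective μ σ α₀ β₀ q =
        sparseObjective μ σ α₀ β₀ (gammaMeasure (α₀ + 1 / 2) (β₀ + (μ ^ 2 + σ ^ 2) / 2)) ↔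
      q = gammaMeasure (α₀ + 1 / 2) (β₀ + (μ ^ 2 + σ ^ 2) / 2)) := by
  have ha₁ : 0 < α₀ + 1 / 2 := by positivity
  have hr₁ : 0 < β₀ + (μ ^ 2 + σ ^ 2) / 2 := by positivity
  have := isProbabilityMeasure_gammaMeasure ha₁ hr₁
  obtain ⟨C, hC⟩ := exists_sparseObjective_eq_toReal_klDiv_add μ hσ.ne' hα hβ
  obtain ⟨hkl₁, hq⟩ := hC q hac hkl hint
  obtain ⟨-, hopt⟩ := hC _ (gammaMeasure_absolutelyContinuous hα hβ ha₁ hr₁)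
    (klDiv_gammaMeasure_ne_top hα hβ ha₁ hr₁) (integrable_gaussKL_gammaMeasure μ hσ.ne' ha₁ hr₁)
  rw [hq, hopt, klDiv_eq_informationTheory_klDiv, InformationTheory.klDiv_self,
    ENNReal.toReal_zero, zero_add, add_eq_right, toReal_klDiv_eq_zero_iff hkl₁]
  exact ⟨le_add_of_nonneg_left ENNReal.toReal_nonneg, Iff.rfl⟩
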